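/- Define A_0 = 00 and A_{n+1} = 0·μ²(A_n). Then for every n ≥ 0, the word A_n is 7/3 power-free: no subword u of A_n has a period p with 3|u| ≥ 7p. -/

import Mathlib

/-!
The morphism μ preserves 7/3-power-freeness. A factor of μ(w) of length at least 2p + 1 with
period p comes from one of two sources: if p = 2q, from a factor of w with period q and at
least half the length; if p is odd, from three equal consecutive letters of w. The word μ(w)
itself has no three equal consecutive letters, which also excludes p = 1.

This settles the factors of A (n + 1) = 0·μ²(A n) that avoid its first letter. For the others,
read 0·μ²(w) as a suffix of μ(1·μ(w)) and 1·μ(w) as a suffix of μ(0·w): a 7/3-power prefix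
descends twice, to a 7/3-power prefix of 0·A n of length at least 4. Such a prefix, with period
r, repeats the initial 000 of 0·A n at position r, but 0·A n has no other three equal
consecutive letters.
-/

/-- The Thue-Morse morphism: μ(0)=01, μ(1)=10, with 0 = `false`, 1 = `true`. -/
def mu (w : List Bool) : List Bool := w.flatMap fun b => [b, !b]

/-- `u` has period `p`: u(i) = u(i+p) for all valid indices. -/
def HasPeriod (u : List Bool) (p : ℕ) : Prop :=
  ∀ i, i + p < u.length → u.getD i false = u.getD (i + p) false

/-- A₀ = 00, Aₙ₊₁ = 0·μ²(Aₙ). -/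
def A : ℕ → List Bool
  | 0 => [false, false]
  | n + 1 => false :: mu (mu (A n))

lemma mu_cons (b : Bool) (w : List Bool) : mu (b :: w) = b :: (!b) :: mu w := rfl

lemma length_mu (w : List Bool) : (mu w).length = 2 * w.length := by
  induction w with
  | nil => rfl
  | cons b w ih => simp only [mu_cons, List.length_cons, ih]; ring

lemma getD_mu_two_mul (w : List Bool) (k : ℕ) : (mu w).getD (2 * k) false = w.getD k false := by
  induction w generalizing k with
  | nil => rfl
  | cons b w ih => cases k with
    | zero => rfl
    | succ k => simpa [mu_cons, Nat.mul_succ] using ih k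

lemma getD_mu_two_mul_add_one {w : List Bool} {k : ℕ} (hk : k < w.length) :
    (mu w).getD (2 * k + 1) false = !w.getD k false := by
  induction w generalizing k with
  | nil => simp at hk
  | cons b w ih => cases k with
    | zero => rfl
    | succ k => simpa [mu_cons, Nat.mul_succ] using ih (by simpa using hk)

def HasPeriodAt (s : List Bool) (a l p : ℕ) : Prop :=
  a + l ≤ s.length ∧ ∀ i, a ≤ i → i + p < a + l → s.getD i false = s.getD (i + p) false

def SevenThirdsFree (w : List Bool) : Prop :=
  ∀ a l p, 1 ≤ p → HasPeriodAt w a l p → 3 * l < 7 * p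

namespace HasPeriodAt

variable {s : List Bool} {a l p : ℕ}

lemma cons (h : HasPeriodAt s a l p) (b : Bool) : HasPeriodAt (b :: s) (a + 1) l p := by
  refine ⟨by simp only [List.length_cons]; have := h.1; omega, fun i hi hip => ?_⟩
  obtain ⟨j, rfl⟩ : ∃ j, i = j + 1 := ⟨i - 1, by omega⟩
  simpa [Nat.add_right_comm j 1 p] using h.2 j (by omega) (by omega)

lemma of_cons {b : Bool} (h : HasPeriodAt (b :: s) (a + 1) l p) : HasPeriodAt s a l p := by
  refine ⟨by have := h.1; simp only [List.length_cons] at this; omega, fun i hi hip => ?_⟩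
  simpa [Nat.add_right_comm i 1 p] using h.2 (i + 1) (by omega) (by omega)

lemma mono {a' l' : ℕ} (h : HasPeriodAt s a l p) (ha : a ≤ a') (hl : a' + l' ≤ a + l) :
    HasPeriodAt s a' l' p :=
  ⟨by have := h.1; omega, fun i hi hip => h.2 i (by omega) (by omega)⟩

end HasPeriodAt

lemma hasPeriodAt_three_one {s : List Bool} {a : ℕ} (h : a + 3 ≤ s.length)
    (h₀ : s.getD a false = s.getD (a + 1) false)
    (h₁ : s.getD (a + 1) false = s.getD (a + 2) false) : HasPeriodAt s a 3 1 := by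
  refine ⟨h, fun i hi hip => ?_⟩
  obtain rfl | rfl : i = a ∨ i = a + 1 := by omega
  exacts [h₀, h₁]

lemma not_hasPeriodAt_mu_three_one (w : List Bool) (a : ℕ) : ¬ HasPeriodAt (mu w) a 3 1 := by
  rintro ⟨hlen, h⟩
  rw [length_mu] at hlen
  obtain ⟨k, rfl | rfl⟩ := Nat.even_or_odd' a
  · have := h (2 * k) le_rfl (by omega)
    rw [getD_mu_two_mul, getD_mu_two_mul_add_one (by omega)] at this
    simp at this
  · have := h (2 * k + 1 + 1) (by omega) (by omega)
    rw [show 2 * k + 1 + 1 = 2 * (k + 1) by ring, getD_mu_two_mul,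
      getD_mu_two_mul_add_one (by omega)] at this
    simp at this

lemma not_hasPeriodAt_cons_mu_three_one (b : Bool) (w : List Bool) (a : ℕ) :
    ¬ HasPeriodAt (b :: mu w) a 3 1 := by
  intro h
  cases a with
  | zero =>
    have hw : 0 < w.length := by
      have := h.1
      simp only [List.length_cons, length_mu] at this
      omega
    have h₁ : (mu w).getD (2 * 0) false = (mu w).getD (2 * 0 + 1) false :=
      h.2 1 (by omega) (by omega)
    rw [getD_mu_two_mul, getD_mu_two_mul_add_one hw] at h₁
    simp at h₁
  | succ a => exact not_hasPeriodAt_mu_three_one w a h.of_cons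

lemma HasPeriodAt.of_mu_two_mul {w : List Bool} {a l q : ℕ} (hl : 2 * q < l)
    (h : HasPeriodAt (mu w) a l (2 * q)) :
    ∃ m, l + a % 2 ≤ 2 * m ∧ HasPeriodAt w (a / 2) m q := by
  obtain ⟨hlen, h⟩ := h
  rw [length_mu] at hlen
  -- the letters of `w` whose images meet the window
  refine ⟨(a + l - 1) / 2 - a / 2 + 1, by omega, by omega, fun k hk hkq => ?_⟩
  rcases le_or_gt a (2 * k) with hk' | hk'
  · have := h (2 * k) hk' (by omega)
    rwa [← mul_add, getD_mu_two_mul, getD_mu_two_mul] at this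
  · have := h (2 * k + 1) (by omega) (by omega)
    rwa [add_right_comm, ← mul_add, getD_mu_two_mul_add_one (by omega),
      getD_mu_two_mul_add_one (by omega), Bool.not_inj_iff] at this

lemma getD_eq_succ_of_getD_mu {w : List Bool} {j m : ℕ} (hj : j < w.length)
    (hm : m + 1 < w.length)
    (h₁ : (mu w).getD (2 * j) false = (mu w).getD (2 * m + 1) false)
    (h₂ : (mu w).getD (2 * j + 1) false = (mu w).getD (2 * (m + 1)) false) :
    w.getD m false = w.getD (m + 1) false := by
  rw [getD_mu_two_mul, getD_mu_two_mul_add_one (by omega)] at h₁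
  rw [getD_mu_two_mul, getD_mu_two_mul_add_one hj] at h₂
  rw [← h₂, h₁, Bool.not_not]

/-- As `p` is odd, translating positions `2m+1` and `2m+2` by `p` (within the window, forward or
backward) lands on the image `μ(w_j)` of a single letter, which forces `w_m = w_(m+1)`. -/
lemma HasPeriodAt.getD_eq_succ_of_mu {w : List Bool} {a l p m : ℕ} (hp : Odd p)
    (h : HasPeriodAt (mu w) a l p)
    (hm : (a ≤ 2 * m + 1 ∧ 2 * m + 2 + p < a + l) ∨ (a + p ≤ 2 * m + 1 ∧ 2 * m + 2 < a + l)) :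
    w.getD m false = w.getD (m + 1) false := by
  obtain ⟨hlen, h⟩ := h
  rw [length_mu] at hlen
  obtain ⟨r, rfl⟩ := hp
  rcases hm with ⟨h₁, h₂⟩ | ⟨h₁, h₂⟩
  · apply getD_eq_succ_of_getD_mu (j := m + r + 1) (by omega) (by omega)
    · have := h (2 * m + 1) h₁ (by omega)
      rw [show 2 * m + 1 + (2 * r + 1) = 2 * (m + r + 1) by ring] at this
      exact this.symm
    · have := h (2 * (m + 1)) (by omega) (by omega)
      rw [show 2 * (m + 1) + (2 * r + 1) = 2 * (m + r + 1) + 1 by ring] at this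
      exact this.symm
  · obtain ⟨j, rfl⟩ : ∃ j, m = j + r := ⟨m - r, by omega⟩
    apply getD_eq_succ_of_getD_mu (j := j) (by omega) (by omega)
    · have := h (2 * j) (by omega) (by omega)
      rwa [show 2 * j + (2 * r + 1) = 2 * (j + r) + 1 by ring] at this
    · have := h (2 * j + 1) (by omega) (by omega)
      rwa [show 2 * j + 1 + (2 * r + 1) = 2 * (j + r + 1) by ring] at this

lemma HasPeriodAt.exists_three_one_of_mu_odd {w : List Bool} {a l p : ℕ} (hp : Odd p)
    (hp3 : 3 ≤ p) (hl : 2 * p + 1 ≤ l) (h : HasPeriodAt (mu w) a l p) :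
    ∃ m, a ≤ 2 * m ∧ HasPeriodAt w m 3 1 := by
  have hlen := h.1
  rw [length_mu] at hlen
  obtain ⟨r, rfl⟩ := hp
  refine ⟨a / 2 + r, by omega, hasPeriodAt_three_one (by omega) ?_ ?_⟩
  · exact h.getD_eq_succ_of_mu (odd_two_mul_add_one r) (by omega)
  · exact h.getD_eq_succ_of_mu (odd_two_mul_add_one r) (by omega)

lemma HasPeriodAt.of_mu {w : List Bool} {a l p : ℕ} (hp : 1 ≤ p) (hl : 2 * p + 1 ≤ l)
    (h : HasPeriodAt (mu w) a l p) :
    (∃ q m, p = 2 * q ∧ l + a % 2 ≤ 2 * m ∧ HasPeriodAt w (a / 2) m q) ∨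
      ∃ m, a ≤ 2 * m ∧ HasPeriodAt w m 3 1 := by
  obtain ⟨q, rfl | rfl⟩ := Nat.even_or_odd' p
  · obtain ⟨m, hm, h'⟩ := h.of_mu_two_mul (by omega)
    exact Or.inl ⟨q, m, rfl, hm, h'⟩
  · rcases q.eq_zero_or_pos with rfl | hq
    · exact (not_hasPeriodAt_mu_three_one w a (h.mono le_rfl (by omega))).elim
    · exact Or.inr (h.exists_three_one_of_mu_odd (odd_two_mul_add_one q) (by omega) hl)

lemma sevenThirdsFree_mu {w : List Bool} (hw : SevenThirdsFree w) : SevenThirdsFree (mu w) := by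
  intro a l p hp h
  by_contra! hl
  rcases h.of_mu hp (by omega) with ⟨q, m, rfl, hm, h'⟩ | ⟨m, -, h'⟩
  · have := hw _ _ _ (by omega) h'
    omega
  · have := hw _ _ _ le_rfl h'
    omega

/-- `0·A n` begins with the cube `000`, so this is the most one can ask of its prefixes. -/
def LongPrefixesFree (v : List Bool) : Prop :=
  ∀ m r, 4 ≤ m → 1 ≤ r → HasPeriodAt v 0 m r → 3 * m < 7 * r

lemma sevenThirdsFree_zero_cons_mu_mu {w : List Bool} (hw : SevenThirdsFree w)
    (hpre : LongPrefixesFree (false :: w)) : SevenThirdsFree (false :: mu (mu w)) := by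
  rintro (_ | a) l p hp h
  · by_contra! hl
    -- `0·μ²(w)` is a suffix of `μ(1·μ(w))`, and `1·μ(w)` one of `μ(0·w)`
    have h₁ : HasPeriodAt (mu (true :: mu w)) 1 l p := h.cons true
    rcases h₁.of_mu hp (by omega) with ⟨q, m₁, rfl, hm₁, h₁⟩ | ⟨m, -, hcube⟩
    · have h₂ : HasPeriodAt (mu (false :: w)) 1 m₁ q := h₁.cons false
      rcases h₂.of_mu (by omega) (by omega) with ⟨r, m₂, rfl, hm₂, h₂⟩ | ⟨m, hm, hcube⟩
      · have := hpre m₂ r (by omega) (by omega) h₂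
        omega
      · obtain ⟨k, rfl⟩ : ∃ k, m = k + 1 := ⟨m - 1, by omega⟩
        have := hw k 3 1 le_rfl hcube.of_cons
        omega
    · exact not_hasPeriodAt_cons_mu_three_one true w m hcube
  · exact sevenThirdsFree_mu (sevenThirdsFree_mu hw) a l p hp h.of_cons

lemma longPrefixesFree_zero_zero_mu_mu (t : List Bool) :
    LongPrefixesFree (false :: false :: mu (mu (false :: t))) := by
  intro m r hm hr h
  by_contra! hl
  have hlen := h.1
  have e : ∀ i < 3, (false :: false :: mu (mu (false :: t))).getD (r + i) false = false := by
    intro i hi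
    rw [add_comm, ← h.2 i (by omega) (by omega)]
    interval_cases i <;> rfl
  obtain ⟨k, rfl⟩ : ∃ k, r = k + 1 := ⟨r - 1, by omega⟩
  exact not_hasPeriodAt_cons_mu_three_one false (mu (false :: t)) k (HasPeriodAt.of_cons
    (hasPeriodAt_three_one (by omega) ((e 0 (by omega)).trans (e 1 (by omega)).symm)
      ((e 1 (by omega)).trans (e 2 (by omega)).symm)))

lemma longPrefixesFree_zero_cons_A (n : ℕ) : LongPrefixesFree (false :: A n) := by
  cases n with
  | zero =>
    intro m r hm _ h
    have := h.1
    simp only [A, List.length_cons, List.length_nil] at this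
    omega
  | succ n =>
    obtain ⟨t, ht⟩ : ∃ t, A n = false :: t := by cases n <;> exact ⟨_, rfl⟩
    rw [A, ht]
    exact longPrefixesFree_zero_zero_mu_mu t

lemma sevenThirdsFree_A (n : ℕ) : SevenThirdsFree (A n) := by
  induction n with
  | zero =>
    intro a l p hp h
    have := h.1
    simp only [A, List.length_cons, List.length_nil] at this
    omega
  | succ n ih => exact sevenThirdsFree_zero_cons_mu_mu ih (longPrefixesFree_zero_cons_A n)

lemma exists_hasPeriodAt_of_isInfix {u s : List Bool} {p : ℕ} (hu : u <:+: s)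
    (hp : HasPeriod u p) : ∃ a, HasPeriodAt s a u.length p := by
  obtain ⟨x, y, rfl⟩ := hu
  refine ⟨x.length, by simp, fun i hi hip => ?_⟩
  obtain ⟨j, rfl⟩ : ∃ j, i = x.length + j := ⟨i - x.length, by omega⟩
  have hget : ∀ k < u.length, (x ++ u ++ y).getD (x.length + k) false = u.getD k false :=
    fun k hk => by
      rw [List.append_assoc, List.getD_append_right _ _ _ _ (by omega), Nat.add_sub_cancel_left,
        List.getD_append _ _ _ _ hk]
  rw [add_assoc, hget j (by omega), hget (j + p) (by omega)]
  exact hp j (by omega)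

theorem A_seven_thirds_free (n : ℕ) :
    ∀ u p, u <:+: A n → 1 ≤ p → HasPeriod u p → 3 * u.length < 7 * p := by
  intro u p hu hp hper
  obtain ⟨a, h⟩ := exists_hasPeriodAt_of_isInfix hu hper
  exact sevenThirdsFree_A n a u.length p hp h
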